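/- For every integer k ≥ 3, the function g_k(x) = x f_{k−1}(x)/f_k(x) on (0, ∞) satisfies g_k(x) → k as x → 0⁺, and its derivative equals (1/x)·g_k(x)·(1 + g_{k−1}(x) − g_k(x)), which is positive; hence g_k is strictly increasing on (0, ∞). -/

import Mathlib

open Real Finset Filter

noncomputable def fTail (j : ℕ) (x : ℝ) : ℝ :=
  Real.exp x - ∑ i ∈ Finset.range j, x ^ i / (Nat.factorial i : ℝ)

noncomputable def gFun (k : ℕ) (x : ℝ) : ℝ := x * fTail (k - 1) x / fTail k x

/-!
Write `f_a` for `fTail a` and `h_a = x f_{a-1} - a f_a = ∑_{n ≥ a} (n - a) xⁿ / n!`, so that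
`h_a / f_a` is the mean excess over `a` of a Poisson variable conditioned to be at least `a`.
Both families satisfy `f_a' = f_{a-1}`, `h_a' = h_{a-1}`, hence the minors
`W_{a,b} = h_a f_b - h_b f_a` satisfy `W_{a,b}' = W_{a-1,b} + W_{a,b-1}` and vanish at `0`.
Since `W_{a,a} = 0` and `W_{0,b} = b eˣ f_{b+1} > 0`, induction gives `W_{a,b} > 0` on `(0, ∞)`
for `a < b`. The derivative of `g_{j+1} = x f_j / f_{j+1}` is `W_{j,j+1} / f_{j+1}²`.
The limit at `0⁺` comes from `f_j(x) ~ xʲ / j!`.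
-/

open scoped Nat Topology

lemma fTail_eq_add_fTail_succ (j : ℕ) (x : ℝ) : fTail j x = x ^ j / j ! + fTail (j + 1) x := by
  simp only [fTail, sum_range_succ]
  ring

lemma fTail_nonneg {x : ℝ} (hx : 0 ≤ x) (j : ℕ) : 0 ≤ fTail j x :=
  sub_nonneg.2 (sum_le_exp_of_nonneg hx j)

lemma fTail_pos {x : ℝ} (hx : 0 < x) (j : ℕ) : 0 < fTail j x := by
  rw [fTail_eq_add_fTail_succ]
  exact add_pos_of_pos_of_nonneg (by positivity) (fTail_nonneg hx.le _)

lemma fTail_succ_zero (j : ℕ) : fTail (j + 1) 0 = 0 := by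
  simp [fTail, sum_range_succ']

lemma hasDerivAt_pow_div_factorial_succ (j : ℕ) (x : ℝ) :
    HasDerivAt (fun y : ℝ => y ^ (j + 1) / (j + 1)!) (x ^ j / j !) x := by
  refine ((hasDerivAt_pow (j + 1) x).div_const _).congr_deriv ?_
  push_cast [Nat.factorial_succ, Nat.add_sub_cancel]
  field_simp

lemma hasDerivAt_fTail_succ (j : ℕ) (x : ℝ) : HasDerivAt (fTail (j + 1)) (fTail j x) x := by
  induction j with
  | zero =>
    have h : fTail 1 = fun y => exp y - 1 := funext fun y => by simp [fTail]
    simpa [h, fTail] using (hasDerivAt_exp x).sub_const 1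
  | succ j ih =>
    have hrec : fTail (j + 2) = fun y => fTail (j + 1) y - y ^ (j + 1) / (j + 1)! := by
      funext y
      rw [fTail_eq_add_fTail_succ (j + 1)]
      ring
    rw [hrec]
    refine (ih.sub (hasDerivAt_pow_div_factorial_succ j x)).congr_deriv ?_
    rw [fTail_eq_add_fTail_succ j x]
    ring

lemma hasDerivAt_fTail (j : ℕ) (x : ℝ) : HasDerivAt (fTail j) (fTail (j - 1) x) x := by
  cases j with
  | zero =>
    have h : fTail 0 = exp := funext fun y => by simp [fTail]
    simpa [h] using hasDerivAt_exp x
  | succ j => exact hasDerivAt_fTail_succ j x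

lemma pos_of_hasDerivAt_pos {g g' : ℝ → ℝ} (hg : ∀ x, HasDerivAt g (g' x) x) (h0 : g 0 = 0)
    (hg' : ∀ x, 0 < x → 0 < g' x) {x : ℝ} (hx : 0 < x) : 0 < g x := by
  have hmono : StrictMonoOn g (Set.Ici 0) :=
    strictMonoOn_of_hasDerivWithinAt_pos (convex_Ici 0)
      (fun y _ => (hg y).continuousAt.continuousWithinAt)
      (fun y _ => (hg y).hasDerivWithinAt) (fun y hy => hg' y (by simpa using hy))
  simpa [h0] using hmono Set.self_mem_Ici hx.le hx

/-- `0 - 1 = 0` in `ℕ` makes `fExcess 0 x = x eˣ`, which is what `h_1' = h_0` needs. -/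
noncomputable def fExcess (a : ℕ) (x : ℝ) : ℝ := x * fTail (a - 1) x - a * fTail a x

lemma hasDerivAt_fExcess_succ (a : ℕ) (x : ℝ) :
    HasDerivAt (fExcess (a + 1)) (fExcess a x) x := by
  have h : fExcess (a + 1) = fun y => y * fTail a y - ((a + 1 : ℕ) : ℝ) * fTail (a + 1) y := by
    funext y
    simp [fExcess]
  rw [h]
  refine (((hasDerivAt_id x).mul (hasDerivAt_fTail a x)).sub
    ((hasDerivAt_fTail_succ a x).const_mul _)).congr_deriv ?_
  simp only [fExcess, id]
  push_cast
  ring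

noncomputable def excessMinor (a b : ℕ) (x : ℝ) : ℝ :=
  fExcess a x * fTail b x - fExcess b x * fTail a x

lemma excessMinor_self (a : ℕ) (x : ℝ) : excessMinor a a x = 0 := by
  rw [excessMinor, sub_self]

lemma excessMinor_succ_succ_zero (a b : ℕ) : excessMinor (a + 1) (b + 1) 0 = 0 := by
  simp [excessMinor, fTail_succ_zero]

lemma hasDerivAt_excessMinor_succ_succ (a b : ℕ) (x : ℝ) :
    HasDerivAt (excessMinor (a + 1) (b + 1))
      (excessMinor a (b + 1) x + excessMinor (a + 1) b x) x := by
  refine (((hasDerivAt_fExcess_succ a x).mul (hasDerivAt_fTail_succ b x)).sub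
    ((hasDerivAt_fExcess_succ b x).mul (hasDerivAt_fTail_succ a x))).congr_deriv ?_
  simp only [excessMinor]
  ring

lemma excessMinor_zero_succ (b : ℕ) (x : ℝ) :
    excessMinor 0 (b + 1) x = (b + 1) * exp x * fTail (b + 2) x := by
  have hterm : x * (x ^ b / b !) = (b + 1) * (x ^ (b + 1) / (b + 1)!) := by
    push_cast [Nat.factorial_succ]
    field_simp
    ring
  have hf0 : fTail 0 x = exp x := by simp [fTail]
  simp only [excessMinor, fExcess, Nat.zero_sub, Nat.add_sub_cancel, hf0]
  rw [fTail_eq_add_fTail_succ b x, fTail_eq_add_fTail_succ (b + 1) x]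
  push_cast
  linear_combination (-exp x) * hterm

lemma excessMinor_pos {a b : ℕ} (hab : a < b) {x : ℝ} (hx : 0 < x) : 0 < excessMinor a b x := by
  induction a generalizing b x with
  | zero =>
    obtain ⟨b, rfl⟩ := Nat.exists_eq_add_of_lt hab
    rw [zero_add, excessMinor_zero_succ]
    have := fTail_pos hx (b + 2)
    positivity
  | succ a iha =>
    induction b generalizing x with
    | zero => omega
    | succ b ihb =>
      refine pos_of_hasDerivAt_pos (hasDerivAt_excessMinor_succ_succ a b)
        (excessMinor_succ_succ_zero a b) (fun y hy => ?_) hx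
      have hnext : 0 ≤ excessMinor (a + 1) b y := by
        rcases (Nat.lt_succ_iff.1 hab).eq_or_lt with h | h
        · rw [h, excessMinor_self]
        · exact (ihb h hy).le
      exact add_pos_of_pos_of_nonneg (iha (by omega) hy) hnext

lemma gFun_succ (j : ℕ) : gFun (j + 1) = fun x => x * fTail j x / fTail (j + 1) x := by
  funext x
  simp [gFun]

lemma hasDerivAt_gFun_succ (j : ℕ) {x : ℝ} (hx : 0 < x) :
    HasDerivAt (gFun (j + 1)) (excessMinor j (j + 1) x / fTail (j + 1) x ^ 2) x := by
  rw [gFun_succ]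
  refine (((hasDerivAt_id x).mul (hasDerivAt_fTail j x)).div (hasDerivAt_fTail_succ j x)
    (fTail_pos hx _).ne').congr_deriv ?_
  simp only [excessMinor, fExcess, Pi.mul_apply, id, Nat.add_sub_cancel]
  push_cast
  ring

lemma gFun_deriv_expr_eq (j : ℕ) {x : ℝ} (hx : 0 < x) :
    1 / x * gFun (j + 1) x * (1 + gFun j x - gFun (j + 1) x)
      = excessMinor j (j + 1) x / fTail (j + 1) x ^ 2 := by
  have := (fTail_pos hx j).ne'
  have := (fTail_pos hx (j + 1)).ne'
  simp only [gFun, excessMinor, fExcess, Nat.add_sub_cancel]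
  field_simp
  push_cast
  ring

lemma tendsto_fTail_succ_div_pow (j : ℕ) :
    Tendsto (fun x => fTail (j + 1) x / x ^ j) (𝓝[≠] 0) (𝓝 0) := by
  set C : ℝ := (j + 2 : ℕ) / ((j + 1)! * (j + 1 : ℕ))
  have hC : Tendsto (fun x : ℝ => |x| * C) (𝓝[≠] 0) (𝓝 0) := by
    have : Continuous fun x : ℝ => |x| * C := by fun_prop
    simpa using (this.tendsto 0).mono_left nhdsWithin_le_nhds
  refine squeeze_zero_norm' ?_ hC
  filter_upwards [self_mem_nhdsWithin, nhdsWithin_le_nhds (Icc_mem_nhds neg_one_lt_zero one_pos)]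
    with x hx0 hx1
  have hbound := exp_bound (abs_le.2 hx1) (Nat.succ_pos j)
  rw [norm_div, norm_pow, Real.norm_eq_abs, Real.norm_eq_abs,
    div_le_iff₀ (pow_pos (abs_pos.2 hx0) j)]
  calc |fTail (j + 1) x| ≤ |x| ^ (j + 1) * C := hbound
    _ = |x| * C * |x| ^ j := by ring

lemma tendsto_fTail_div_pow (j : ℕ) :
    Tendsto (fun x => fTail j x / x ^ j) (𝓝[≠] 0) (𝓝 (1 / j !)) := by
  have h := (tendsto_fTail_succ_div_pow j).const_add (1 / (j ! : ℝ))
  rw [add_zero] at h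
  refine h.congr' ?_
  filter_upwards [self_mem_nhdsWithin] with x hx
  have : x ^ j ≠ 0 := pow_ne_zero j hx
  rw [fTail_eq_add_fTail_succ j x]
  field_simp

lemma tendsto_gFun_succ (j : ℕ) : Tendsto (gFun (j + 1)) (𝓝[≠] 0) (𝓝 ((j + 1 : ℕ) : ℝ)) := by
  have h := (tendsto_fTail_div_pow j).div (tendsto_fTail_div_pow (j + 1)) (by positivity)
  have hlim : (1 / j ! : ℝ) / (1 / (j + 1)!) = ((j + 1 : ℕ) : ℝ) := by
    push_cast [Nat.factorial_succ]
    field_simp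
  rw [hlim] at h
  refine h.congr' ?_
  filter_upwards [self_mem_nhdsWithin] with x hx
  have : x ^ j ≠ 0 := pow_ne_zero j hx
  simp only [gFun_succ, Pi.div_apply]
  rw [div_div_div_eq, pow_succ, mul_left_comm, mul_div_mul_left _ _ this, mul_comm]

/-- for `k ≥ 3`, `g_k(x) = x f_{k-1}(x)/f_k(x)` satisfies `g_k(x) → k` as
`x → 0⁺`; its derivative equals `(1/x) g_k(x) (1 + g_{k-1}(x) − g_k(x))`, which is
positive; hence `g_k` is strictly increasing on `(0, ∞)`. -/
theorem gFun_limit_deriv_strictMono (k : ℕ) (hk : 3 ≤ k) :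
    Tendsto (gFun k) (nhdsWithin 0 (Set.Ioi 0)) (nhds (k : ℝ)) ∧
    (∀ x : ℝ, 0 < x →
      HasDerivAt (gFun k) (1 / x * gFun k x * (1 + gFun (k - 1) x - gFun k x)) x ∧
      0 < 1 / x * gFun k x * (1 + gFun (k - 1) x - gFun k x)) ∧
    StrictMonoOn (gFun k) (Set.Ioi 0) := by
  obtain ⟨j, rfl⟩ : ∃ j, k = j + 1 := ⟨k - 1, by omega⟩
  have hderiv : ∀ x : ℝ, 0 < x →
      HasDerivAt (gFun (j + 1)) (1 / x * gFun (j + 1) x * (1 + gFun j x - gFun (j + 1) x)) x ∧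
      0 < 1 / x * gFun (j + 1) x * (1 + gFun j x - gFun (j + 1) x) := fun x hx => by
    rw [gFun_deriv_expr_eq j hx]
    exact ⟨hasDerivAt_gFun_succ j hx,
      div_pos (excessMinor_pos j.lt_succ_self hx) (pow_pos (fTail_pos hx _) 2)⟩
  refine ⟨(tendsto_gFun_succ j).mono_left (nhdsWithin_mono _ fun x hx => ne_of_gt hx),
    by simpa using hderiv, ?_⟩
  refine strictMonoOn_of_hasDerivWithinAt_pos (convex_Ioi 0)
    (fun x hx => (hderiv x hx).1.continuousAt.continuousWithinAt)
    (fun x hx => (hderiv x ?_).1.hasDerivWithinAt) (fun x hx => (hderiv x ?_).2) <;>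
  simpa using hx
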